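/- Let h ∈ 𝕃 with deg h = −1, f ∈ 𝕃 ∖ 𝔽_q(t), k ≥ 0, and 1 ≤ i ≤ deg A_{k+1}. Then |f − U^h_{k,i}/V^h_{k,i}| = q^{−i} / (|Q_{k+1}|·|Q_k|). -/

import Mathlib

/-!
Setting: `q` a prime power is formalized as `q = Fintype.card Fq` for a finite field `Fq`.
The field `K = 𝔽_q((t⁻¹))` of formal Laurent series in `t⁻¹` is realized as
`LaurentSeries Fq = 𝔽_q((X))` with `X = t⁻¹` (so `deg f = -(X-adic order of f)`).
-/

open scoped Classical
open MeasureTheory Filter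
open scoped ENNReal

noncomputable section

variable (Fq : Type) [Field Fq] [Fintype Fq]

/-- `t ∈ K = 𝔽_q((t⁻¹))`, realized as the inverse of the variable `X` of
`LaurentSeries Fq`. -/
def tvar : LaurentSeries Fq := (HahnSeries.single (1 : ℤ) (1 : Fq))⁻¹

/-- The degree `deg f ∈ ℤ ∪ {-∞}` of `f ∈ K`, with `deg 0 = ⊥ = -∞`. -/
def fdeg (f : LaurentSeries Fq) : WithBot ℤ :=
  if f = 0 then ⊥ else ((-f.order : ℤ) : WithBot ℤ)

/-- The absolute value `|f| = q^(deg f)`, with `|0| = 0`. -/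
def fabs (f : LaurentSeries Fq) : ℝ :=
  if f = 0 then 0 else (Fintype.card Fq : ℝ) ^ (-f.order)

/-- Keep only the part of `f` with `X`-exponents `≤ N`, i.e. `t`-exponents `≥ -N`. -/
def cutoff (N : ℤ) (f : LaurentSeries Fq) : LaurentSeries Fq where
  coeff j := if j ≤ N then f.coeff j else 0
  isPWO_support' := f.isPWO_support'.mono (by
    intro j hj
    by_cases hN : j ≤ N
    · simpa [Function.mem_support, hN] using hj
    · simp [Function.mem_support, hN] at hj)

/-- The polynomial part `[f] ∈ 𝔽_q[t]` of `f` (the part with `t`-exponents `≥ 0`). -/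
def polyPart (f : LaurentSeries Fq) : LaurentSeries Fq := cutoff Fq 0 f

/-- The fractional part `{f} = f - [f]`. -/
def fracPart (f : LaurentSeries Fq) : LaurentSeries Fq := f - polyPart Fq f

/-- `𝒪 = {f ∈ K : |f| ≤ 1}`. -/
def setO : Set (LaurentSeries Fq) := {f | fabs Fq f ≤ 1}

/-- `𝕃 = {f ∈ K : |f| < 1}`. -/
def setL : Set (LaurentSeries Fq) := {f | fabs Fq f < 1}

/-- `𝕁₀ = {f ∈ 𝒪 : deg f = 0}`. -/
def setJ0 : Set (LaurentSeries Fq) := {f | fdeg Fq f = ((0 : ℤ) : WithBot ℤ)}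

/-- The embedding `𝔽_q[t] → K`, sending a polynomial `P` to `P(t)`. -/
def polyT (P : Polynomial Fq) : LaurentSeries Fq := Polynomial.aeval (tvar Fq) P

/-- The subfield `𝔽_q(t) ⊆ K` of rational functions (as a subset). -/
def ratSet : Set (LaurentSeries Fq) :=
  {g | ∃ P Q : Polynomial Fq, Q ≠ 0 ∧ g = polyT Fq P / polyT Fq Q}

/-- The Artin map `Ψ(f) = {1/f}`. -/
def artin (f : LaurentSeries Fq) : LaurentSeries Fq := fracPart Fq f⁻¹

/-- The partial quotients `A_n = [1/Ψ^{n-1}(f)]` (`n ≥ 1`). -/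
def pquot (f : LaurentSeries Fq) (n : ℕ) : LaurentSeries Fq :=
  polyPart Fq (((artin Fq)^[n - 1] f)⁻¹)

/-- `convPQ f (k+1) = (P_k, Q_k)`, the principal convergents;
`convPQ f 0 = (P_{-1}, Q_{-1}) = (1, 0)`, `convPQ f 1 = (P_0, Q_0) = (0, 1)`. -/
def convPQ (f : LaurentSeries Fq) : ℕ → LaurentSeries Fq × LaurentSeries Fq
  | 0 => (1, 0)
  | 1 => (0, 1)
  | (n + 2) => (pquot Fq f (n + 1) * (convPQ f (n + 1)).1 + (convPQ f n).1,
                pquot Fq f (n + 1) * (convPQ f (n + 1)).2 + (convPQ f n).2)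

/-- `Pc f (k+1) = P_k`. -/
def Pc (f : LaurentSeries Fq) (n : ℕ) : LaurentSeries Fq := (convPQ Fq f n).1

/-- `Qc f (k+1) = Q_k`. -/
def Qc (f : LaurentSeries Fq) (n : ℕ) : LaurentSeries Fq := (convPQ Fq f n).2

/-- The geometric Farey map `F` on `𝕃 × ℤ`. -/
def fareyGeom (p : LaurentSeries Fq × ℤ) : LaurentSeries Fq × ℤ :=
  if fdeg Fq p.1 < ((-1 : ℤ) : WithBot ℤ) ∨ p.2 < 0 then
    (fracPart Fq (tvar Fq * p.1), p.2 + 1)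
  else
    (fracPart Fq ((tvar Fq * p.1)⁻¹), -(p.2 + 1))

/-- The algebraic Farey map `F_h` associated to `h`. -/
def fareyAlg (h : LaurentSeries Fq) (f : LaurentSeries Fq) : LaurentSeries Fq :=
  if fdeg Fq f = ((0 : ℤ) : WithBot ℤ) then
    (1 - polyPart Fq ((1 - h) * f⁻¹) * f) / f
  else
    f / (1 - polyPart Fq ((1 - h) * f⁻¹) * f)

/-- The matrix `M(f, n)` associated to the geometric Farey map. -/
def geomMat (p : LaurentSeries Fq × ℤ) : Matrix (Fin 2) (Fin 2) (LaurentSeries Fq) :=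
  if p.2 < 0 then
    !![(tvar Fq)⁻¹, (tvar Fq)⁻¹ * polyPart Fq (tvar Fq * p.1); 0, 1]
  else if fdeg Fq p.1 = ((-1 : ℤ) : WithBot ℤ) then
    !![0, 1; tvar Fq, tvar Fq * polyPart Fq ((tvar Fq * p.1)⁻¹)]
  else
    !![1, 0; 0, tvar Fq]

/-- The matrix `M_h(f)` associated to the algebraic Farey map `F_h`. -/
def algMat (h : LaurentSeries Fq) (f : LaurentSeries Fq) :
    Matrix (Fin 2) (Fin 2) (LaurentSeries Fq) :=
  if fdeg Fq f = ((0 : ℤ) : WithBot ℤ) then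
    !![0, 1; 1, polyPart Fq ((1 - h) * f⁻¹)]
  else
    !![1, 0; polyPart Fq ((1 - h) * f⁻¹), 1]

/-- The leading term `LT(f)` of `f`. -/
def leadTerm (f : LaurentSeries Fq) : LaurentSeries Fq :=
  HahnSeries.single f.order (f.coeff f.order)

/-- `G(f) = 1/f - 1/LT(f)`. -/
def Gmap (f : LaurentSeries Fq) : LaurentSeries Fq := f⁻¹ - (leadTerm Fq f)⁻¹

/-- The Farey map `F_𝕁` of Berthé–Nakada–Natsui. -/
def fareyBNN (f : LaurentSeries Fq) : LaurentSeries Fq :=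
  if ((0 : ℤ) : WithBot ℤ) ≤ fdeg Fq (Gmap Fq f) then (Gmap Fq f)⁻¹
  else f⁻¹ - polyPart Fq f⁻¹

/-- The Borel measurable structure on `K`, for the valued-field topology. -/
instance : MeasurableSpace (LaurentSeries Fq) := borel _
instance : BorelSpace (LaurentSeries Fq) := ⟨rfl⟩

/-!
Write `Ψʲ(f)` for the Artin iterates, so that `1/Ψʲ(f) = A_{j+1} + Ψʲ⁺¹(f)` with
`deg Ψʲ(f) ≤ -1`. Then `f Q_n - P_n = -Ψⁿ(f) (f Q_{n-1} - P_{n-1})`, so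
`|f Q_n - P_n| = ∏_{j ≤ n} |Ψʲ(f)|`, while `|Q_n| = ∏_{j ≤ n} |A_j|` by the ultrametric inequality;
hence `|f Q_n - P_n| = 1/|Q_{n+1}|`. With `B = [hⁱA_{k+1}]`, of degree `deg A_{k+1} - i`, one has
`f V - U = -(B + Ψᵏ⁺¹(f)) (f Q_k - P_k)`, of absolute value `|B|/|Q_{k+1}|`, and `|V| = |Q_{k+1}|`
because `|B Q_k| = q⁻ⁱ |Q_{k+1}|`. Dividing gives `|f - U/V| = |B|/|Q_{k+1}|² = q⁻ⁱ/(|Q_{k+1}| |Q_k|)`.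
-/

namespace HahnSeries

theorem add_ne_zero_and_order_add_eq_left {Γ R : Type*} [LinearOrder Γ] [Zero Γ] [AddMonoid R]
    {x y : HahnSeries Γ R} (hx : x ≠ 0) (hxy : y ≠ 0 → x.order < y.order) :
    x + y ≠ 0 ∧ (x + y).order = x.order := by
  have hlt : x.orderTop < y.orderTop := by
    rcases eq_or_ne y 0 with rfl | hy
    · simpa using hx
    · rw [← order_eq_orderTop_of_ne_zero hx, ← order_eq_orderTop_of_ne_zero hy]
      exact_mod_cast hxy hy
  have hsum := orderTop_add_eq_left hlt
  have hne : x + y ≠ 0 := fun h0 => by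
    rw [h0, orderTop_zero] at hsum
    exact hx (orderTop_eq_top.mp hsum.symm)
  refine ⟨hne, WithTop.coe_injective ?_⟩
  rw [order_eq_orderTop_of_ne_zero hne, order_eq_orderTop_of_ne_zero hx, hsum]

theorem order_inv {Γ F : Type*} [AddCommGroup Γ] [LinearOrder Γ] [IsOrderedAddMonoid Γ]
    [Field F] {x : HahnSeries Γ F} (hx : x ≠ 0) : x⁻¹.order = -x.order := by
  have h := order_mul hx (inv_ne_zero hx)
  rw [mul_inv_cancel₀ hx, order_one] at h
  exact eq_neg_of_add_eq_zero_right h.symm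

end HahnSeries

section ArtinIteration

variable {Fq : Type} [Field Fq]

theorem fdeg_eq_coe_iff {x : LaurentSeries Fq} {m : ℤ} :
    fdeg Fq x = (m : WithBot ℤ) ↔ x ≠ 0 ∧ -x.order = m := by
  unfold fdeg
  split_ifs with hx <;> simp [hx]

theorem coe_le_fdeg_iff {x : LaurentSeries Fq} {m : ℤ} :
    (m : WithBot ℤ) ≤ fdeg Fq x ↔ x ≠ 0 ∧ m ≤ -x.order := by
  unfold fdeg
  split_ifs with hx <;> simp [hx]

theorem polyPart_coeff (x : LaurentSeries Fq) (j : ℤ) :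
    (polyPart Fq x).coeff j = if j ≤ 0 then x.coeff j else 0 := rfl

theorem polyPart_zero : polyPart Fq 0 = 0 := by
  ext j
  simp [polyPart_coeff]

theorem artin_zero : artin Fq 0 = 0 := by
  simp [artin, fracPart, polyPart_zero]

theorem one_le_order_fracPart {x : LaurentSeries Fq} (hx : fracPart Fq x ≠ 0) :
    1 ≤ (fracPart Fq x).order := by
  by_contra! hlt
  refine HahnSeries.coeff_order_eq_zero.not.mpr hx ?_
  generalize (fracPart Fq x).order = n at hlt ⊢
  rw [fracPart, HahnSeries.coeff_sub, polyPart_coeff, if_pos (by omega), sub_self]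

theorem polyPart_ne_zero_and_order {x : LaurentSeries Fq} (hx : x ≠ 0) (hx0 : x.order ≤ 0) :
    polyPart Fq x ≠ 0 ∧ (polyPart Fq x).order = x.order := by
  have hc : (polyPart Fq x).coeff x.order ≠ 0 := by
    rw [polyPart_coeff, if_pos hx0]
    exact HahnSeries.coeff_order_eq_zero.not.mpr hx
  refine ⟨HahnSeries.ne_zero_of_coeff_ne_zero hc,
    le_antisymm (HahnSeries.order_le_of_coeff_ne_zero hc) ?_⟩
  by_contra! hlt
  refine HahnSeries.coeff_order_eq_zero.not.mpr (HahnSeries.ne_zero_of_coeff_ne_zero hc) ?_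
  rw [polyPart_coeff]
  split_ifs
  · exact HahnSeries.coeff_eq_zero_of_lt_order hlt
  · rfl

def artinIter (f : LaurentSeries Fq) (n : ℕ) : LaurentSeries Fq := (artin Fq)^[n] f

theorem artinIter_zero (f : LaurentSeries Fq) : artinIter f 0 = f := rfl

theorem artinIter_succ (f : LaurentSeries Fq) (n : ℕ) :
    artinIter f (n + 1) = artin Fq (artinIter f n) :=
  Function.iterate_succ_apply' _ _ _

theorem artinIter_eq_zero_of_le {f : LaurentSeries Fq} {m n : ℕ} (hm : artinIter f m = 0)
    (hmn : m ≤ n) : artinIter f n = 0 := by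
  induction n, hmn using Nat.le_induction with
  | base => exact hm
  | succ n _ ih => rw [artinIter_succ, ih, artin_zero]

theorem pquot_succ (f : LaurentSeries Fq) (n : ℕ) :
    pquot Fq f (n + 1) = polyPart Fq (artinIter f n)⁻¹ := rfl

theorem inv_artinIter_eq (f : LaurentSeries Fq) (n : ℕ) :
    (artinIter f n)⁻¹ = pquot Fq f (n + 1) + artinIter f (n + 1) := by
  rw [pquot_succ, artinIter_succ, artin, fracPart, add_sub_cancel]

theorem artinIter_ne_zero_of_pquot_ne_zero {f : LaurentSeries Fq} {n : ℕ}
    (hA : pquot Fq f (n + 1) ≠ 0) : artinIter f n ≠ 0 := by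
  rintro h0
  rw [pquot_succ, h0, inv_zero, polyPart_zero] at hA
  exact hA rfl

variable {f : LaurentSeries Fq}

theorem one_le_order_artinIter (hf : 1 ≤ f.order) {n : ℕ} (hn : artinIter f n ≠ 0) :
    1 ≤ (artinIter f n).order := by
  cases n with
  | zero => exact hf
  | succ n =>
    rw [artinIter_succ] at hn ⊢
    exact one_le_order_fracPart hn

theorem pquot_ne_zero_and_order (hf : 1 ≤ f.order) {n : ℕ} (hn : artinIter f n ≠ 0) :
    pquot Fq f (n + 1) ≠ 0 ∧ (pquot Fq f (n + 1)).order = -(artinIter f n).order := by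
  have h1 := one_le_order_artinIter hf hn
  rw [pquot_succ, ← HahnSeries.order_inv hn]
  exact polyPart_ne_zero_and_order (inv_ne_zero hn) (by rw [HahnSeries.order_inv hn]; omega)

theorem Qc_ne_zero_and_order (hf : 1 ≤ f.order) :
    ∀ n, (∀ j < n, artinIter f j ≠ 0) → Qc Fq f (n + 1) ≠ 0 ∧
      (Qc Fq f (n + 1)).order = -∑ j ∈ Finset.range n, (artinIter f j).order
  | 0, _ => ⟨one_ne_zero, by simp [Qc, convPQ]⟩
  | 1, hn => by
    have hA := pquot_ne_zero_and_order hf (hn 0 one_pos)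
    have hQ : Qc Fq f 2 = pquot Fq f 1 := by simp [Qc, convPQ]
    simpa [hQ] using hA
  | n + 2, hn => by
    obtain ⟨hQ1, hQ1o⟩ := Qc_ne_zero_and_order hf n fun j hj => hn j (by omega)
    obtain ⟨hQ2, hQ2o⟩ := Qc_ne_zero_and_order hf (n + 1) fun j hj => hn j (by omega)
    obtain ⟨hA, hAo⟩ := pquot_ne_zero_and_order hf (hn (n + 1) (by omega))
    have hg := one_le_order_artinIter hf (hn n (by omega))
    have hg' := one_le_order_artinIter hf (hn (n + 1) (by omega))
    have hsum := HahnSeries.add_ne_zero_and_order_add_eq_left (mul_ne_zero hA hQ2)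
      (y := Qc Fq f (n + 1)) fun _ => by
        rw [HahnSeries.order_mul hA hQ2, hAo, hQ2o, hQ1o, Finset.sum_range_succ]
        omega
    rw [HahnSeries.order_mul hA hQ2, hAo, hQ2o] at hsum
    refine ⟨hsum.1, ?_⟩
    rw [show Qc Fq f (n + 3) = pquot Fq f (n + 2) * Qc Fq f (n + 2) + Qc Fq f (n + 1) from rfl,
      hsum.2, Finset.sum_range_succ _ (n + 1)]
    ring

def convErr (f : LaurentSeries Fq) (n : ℕ) : LaurentSeries Fq := f * Qc Fq f n - Pc Fq f n

theorem convErr_succ :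
    ∀ n, (∀ j < n, artinIter f j ≠ 0) → convErr f (n + 1) = -artinIter f n * convErr f n
  | 0, _ => by simp [convErr, Qc, Pc, convPQ, artinIter_zero]
  | n + 1, hn => by
    have ih := convErr_succ n fun j hj => hn j (by omega)
    have hA : pquot Fq f (n + 1) = (artinIter f n)⁻¹ - artinIter f (n + 1) := by
      rw [inv_artinIter_eq]; ring
    have hinv := inv_mul_cancel₀ (hn n (by omega))
    simp only [convErr, Qc, Pc, convPQ] at ih ⊢
    rw [hA]
    linear_combination (artinIter f n)⁻¹ * ih - (f * (convPQ Fq f n).2 - (convPQ Fq f n).1) * hinv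

theorem convErr_ne_zero_and_order (hf : 1 ≤ f.order) :
    ∀ n, (∀ j < n, artinIter f j ≠ 0) → convErr f n ≠ 0 ∧
      (convErr f n).order = ∑ j ∈ Finset.range n, (artinIter f j).order
  | 0, _ => by simp [convErr, Qc, Pc, convPQ]
  | n + 1, hn => by
    obtain ⟨hE, hEo⟩ := convErr_ne_zero_and_order hf n fun j hj => hn j (by omega)
    have hg := neg_ne_zero.mpr (hn n (by omega))
    rw [convErr_succ n fun j hj => hn j (by omega), Finset.sum_range_succ,
      HahnSeries.order_mul hg hE, HahnSeries.order_neg, hEo]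
    exact ⟨mul_ne_zero hg hE, add_comm _ _⟩

theorem mul_intermediate_sub_eq {k : ℕ} (hk : ∀ j < k + 1, artinIter f j ≠ 0)
    (B : LaurentSeries Fq) :
    f * (Qc Fq f (k + 2) - B * Qc Fq f (k + 1)) - (Pc Fq f (k + 2) - B * Pc Fq f (k + 1))
      = -((B + artinIter f (k + 1)) * convErr f (k + 1)) := by
  have hE := convErr_succ (k + 1) hk
  simp only [convErr] at hE ⊢
  linear_combination hE

theorem order_sub_intermediate (hf : 1 ≤ f.order) {k : ℕ} (hk : artinIter f k ≠ 0)
    {B : LaurentSeries Fq} (hB : B ≠ 0) (hB0 : B.order ≤ 0)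
    (hBk : 1 ≤ B.order + (artinIter f k).order) :
    f - (Pc Fq f (k + 2) - B * Pc Fq f (k + 1)) / (Qc Fq f (k + 2) - B * Qc Fq f (k + 1)) ≠ 0 ∧
      (f - (Pc Fq f (k + 2) - B * Pc Fq f (k + 1)) /
        (Qc Fq f (k + 2) - B * Qc Fq f (k + 1))).order
        = B.order + 2 * ∑ j ∈ Finset.range (k + 1), (artinIter f j).order := by
  have hks : ∀ j < k + 1, artinIter f j ≠ 0 := fun j hj h0 =>
    hk (artinIter_eq_zero_of_le h0 (by omega))
  obtain ⟨hQ1, hQ1o⟩ := Qc_ne_zero_and_order hf k fun j hj => hks j (by omega)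
  obtain ⟨hQ2, hQ2o⟩ := Qc_ne_zero_and_order hf (k + 1) hks
  obtain ⟨hE, hEo⟩ := convErr_ne_zero_and_order hf (k + 1) hks
  rw [Finset.sum_range_succ] at hQ2o hEo
  obtain ⟨hV, hVo⟩ := HahnSeries.add_ne_zero_and_order_add_eq_left hQ2
    (y := -(B * Qc Fq f (k + 1))) fun _ => by
      rw [HahnSeries.order_neg, HahnSeries.order_mul hB hQ1]
      omega
  obtain ⟨hC, hCo⟩ := HahnSeries.add_ne_zero_and_order_add_eq_left hB
    (y := artinIter f (k + 1)) fun hg => by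
      have := one_le_order_artinIter hf hg
      omega
  rw [← sub_eq_add_neg] at hV hVo
  have hN := mul_intermediate_sub_eq hks B
  have hD : f - (Pc Fq f (k + 2) - B * Pc Fq f (k + 1)) / (Qc Fq f (k + 2) - B * Qc Fq f (k + 1))
      = -((B + artinIter f (k + 1)) * convErr f (k + 1)) / (Qc Fq f (k + 2) - B * Qc Fq f (k + 1))
      := by
    rw [← hN]
    field_simp
  have hNne : (B + artinIter f (k + 1)) * convErr f (k + 1) ≠ 0 := mul_ne_zero hC hE
  rw [hD, div_eq_mul_inv]
  refine ⟨mul_ne_zero (neg_ne_zero.mpr hNne) (inv_ne_zero hV), ?_⟩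
  rw [HahnSeries.order_mul (neg_ne_zero.mpr hNne) (inv_ne_zero hV), HahnSeries.order_neg,
    HahnSeries.order_mul hC hE, HahnSeries.order_inv hV, hCo, hEo, hVo, hQ2o,
    Finset.sum_range_succ]
  ring

end ArtinIteration

section AbsoluteValue

variable {Fq : Type} [Field Fq] [Fintype Fq]

theorem fabs_of_ne_zero {x : LaurentSeries Fq} (hx : x ≠ 0) :
    fabs Fq x = (Fintype.card Fq : ℝ) ^ (-x.order) := if_neg hx

theorem one_le_order_of_mem_setL {x : LaurentSeries Fq} (hxL : x ∈ setL Fq) (hx : x ≠ 0) :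
    1 ≤ x.order := by
  have hq : (1 : ℝ) < Fintype.card Fq := by exact_mod_cast Fintype.one_lt_card
  have hlt : (Fintype.card Fq : ℝ) ^ (-x.order) < 1 := by
    rw [← fabs_of_ne_zero hx]
    exact hxL
  by_contra! h
  exact (one_le_zpow₀ hq.le (by omega)).not_gt hlt

end AbsoluteValue

theorem alg_intermediate_convergent_dist
    (h : LaurentSeries Fq) (hh : fdeg Fq h = ((-1 : ℤ) : WithBot ℤ))
    (f : LaurentSeries Fq) (hfL : f ∈ setL Fq)
    (k : ℕ) (i : ℕ) (hi1 : 1 ≤ i)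
    (hi2 : ((i : ℤ) : WithBot ℤ) ≤ fdeg Fq (pquot Fq f (k + 1))) :
    fabs Fq (f -
        (Pc Fq f (k + 2) - polyPart Fq (h ^ i * pquot Fq f (k + 1)) * Pc Fq f (k + 1)) /
        (Qc Fq f (k + 2) - polyPart Fq (h ^ i * pquot Fq f (k + 1)) * Qc Fq f (k + 1)))
      = (Fintype.card Fq : ℝ) ^ (-(i : ℤ)) /
          (fabs Fq (Qc Fq f (k + 2)) * fabs Fq (Qc Fq f (k + 1))) := by
  obtain ⟨hA, hiA⟩ := coe_le_fdeg_iff.mp hi2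
  obtain ⟨hh0, hho⟩ := fdeg_eq_coe_iff.mp hh
  have hk := artinIter_ne_zero_of_pquot_ne_zero hA
  have hks : ∀ j < k + 1, artinIter f j ≠ 0 := fun j hj h0 =>
    hk (artinIter_eq_zero_of_le h0 (by omega))
  have hf := one_le_order_of_mem_setL hfL (hks 0 k.succ_pos)
  have hAo := (pquot_ne_zero_and_order hf hk).2
  have hhA : h ^ i * pquot Fq f (k + 1) ≠ 0 := mul_ne_zero (pow_ne_zero i hh0) hA
  have hhAo : (h ^ i * pquot Fq f (k + 1)).order = i + (pquot Fq f (k + 1)).order := by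
    rw [HahnSeries.order_mul (pow_ne_zero i hh0) hA, HahnSeries.order_pow,
      show h.order = 1 by omega, nsmul_one]
  obtain ⟨hB, hBo⟩ := polyPart_ne_zero_and_order hhA (by omega)
  obtain ⟨hD, hDo⟩ := order_sub_intermediate hf hk hB (by omega) (by omega)
  obtain ⟨hQ1, hQ1o⟩ := Qc_ne_zero_and_order hf k fun j hj => hks j (by omega)
  obtain ⟨hQ2, hQ2o⟩ := Qc_ne_zero_and_order hf (k + 1) hks
  have hq : (Fintype.card Fq : ℝ) ≠ 0 := by positivity
  rw [fabs_of_ne_zero hD, fabs_of_ne_zero hQ2, fabs_of_ne_zero hQ1, ← zpow_add₀ hq,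
    ← zpow_sub₀ hq, hDo, hBo, hhAo, hAo, hQ1o, hQ2o, Finset.sum_range_succ]
  congr 1
  ring

end
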